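/- arXiv:1105.2160 — 3 statements merged into one kernel-verified Lean document; each statement's English description precedes it below -/
import Mathlib

section
/- Let μ, ν ∈ ℂ with |μ| = |ν| = 1 and μ = ν or μ = −ν. Let V be the complex subspace of ℂ^{n×m} consisting of all matrices whose nonzero entries are confined to the first column if n ≤ m and to the first row if n > m. Then for every pair (B,A) ∈ ℂ^{n×m} × ℂ^{m×n} there exists exactly one D ∈ V such that (B − D, A) ∈ T(μΔ_m, νΔ_n); that is, ℂ^{n×m} × ℂ^{m×n} = T(μΔ_m, νΔ_n) ⊕_ℝ (V × {0}). -/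
open Matrix

/-- The `n×n` upper-triangular Jordan block with eigenvalue `l`. -/
noncomputable def Jmat (n : ℕ) (l : ℂ) : Matrix (Fin n) (Fin n) ℂ :=
  Matrix.of fun i j =>
    if (i : ℕ) = (j : ℕ) then l
    else if (j : ℕ) = (i : ℕ) + 1 then 1 else 0

/-- The symmetric matrix `Δ_n`: (1-based) entry `(j,k)` is `1` if `j+k = n+1`,
`i` if `j+k = n+2`, and `0` otherwise. -/
noncomputable def Dmat (n : ℕ) : Matrix (Fin n) (Fin n) ℂ :=
  Matrix.of fun i j =>
    if (i : ℕ) + (j : ℕ) + 1 = n then 1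
    else if (i : ℕ) + (j : ℕ) = n then Complex.I
    else 0

/-- The `2m×2m` block matrix `H_m(l) = [[0, I],[J_m(l), 0]]`. -/
noncomputable def Hmat (m : ℕ) (l : ℂ) : Matrix (Fin m ⊕ Fin m) (Fin m ⊕ Fin m) ℂ :=
  Matrix.fromBlocks 0 1 (Jmat m l) 0

/-- `T(A) = {CᴴA + AC}`, the tangent space to the *congruence class of `A`. -/
def Tset {n : Type*} [Fintype n] (A : Matrix n n ℂ) : Set (Matrix n n ℂ) :=
  {X | ∃ C : Matrix n n ℂ, X = Cᴴ * A + A * C}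

/-- `T(M,N) = {(SᴴM + NR, RᴴN + MS)}`. -/
def Tpair {p q : Type*} [Fintype p] [Fintype q]
    (M : Matrix p p ℂ) (N : Matrix q q ℂ) :
    Set (Matrix q p ℂ × Matrix p q ℂ) :=
  {X | ∃ (S : Matrix p q ℂ) (R : Matrix q p ℂ),
      X = (Sᴴ * M + N * R, Rᴴ * N + M * S)}

/-!
Write `Δ_n = F (1 + iK)`, where `F` reverses the order of the rows and `K` is the nilpotent upper
shift; then `Δ_nᴴ = F (1 - iK)`. Since `M = μΔ_m` is invertible, the second component of an element
of `T(M, N)` determines `S`, so `(Z, A) ∈ T(M, N)` iff `Z - AᴴW` lies in the range of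
`R ↦ NR - NᴴRW`, where `W = (Mᴴ)⁻¹M = μ²(1 - iK)⁻¹(1 + iK)`. When `|ν| = 1` and `μ² = ν²`,
substituting `R (1 - iK)` for `R` turns this map into `2iν` times `R ↦ Kᵀ(FR) - (FR)K`, so the range
is that of the Sylvester operator `R ↦ KᵀR - RK`. This operator moves entries along anti-diagonals:
the first `min(m, n)` anti-diagonal sums vanish on its range, and by telescoping every `Y` agrees
modulo the range with the matrix carrying the anti-diagonal sums of `Y` in its first column (in its
first row, after transposing, when `m < n`).
-/

open Finset Complex

namespace Matrix

variable {α : Type*} [CommRing α] {n m : ℕ}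

section AntidiagSum

def entryOrZero (X : Matrix (Fin n) (Fin m) α) (a b : ℕ) : α :=
  if h : a < n ∧ b < m then X ⟨a, h.1⟩ ⟨b, h.2⟩ else 0

lemma entryOrZero_of_lt (X : Matrix (Fin n) (Fin m) α) {a b : ℕ} (ha : a < n) (hb : b < m) :
    entryOrZero X a b = X ⟨a, ha⟩ ⟨b, hb⟩ :=
  dif_pos ⟨ha, hb⟩

@[simp]
lemma entryOrZero_coe (X : Matrix (Fin n) (Fin m) α) (i : Fin n) (j : Fin m) :
    entryOrZero X i j = X i j :=
  entryOrZero_of_lt X i.isLt j.isLt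

lemma entryOrZero_transpose (X : Matrix (Fin n) (Fin m) α) (a b : ℕ) :
    entryOrZero Xᵀ a b = entryOrZero X b a := by
  simp only [entryOrZero, transpose_apply, and_comm]

def antidiagSum (X : Matrix (Fin n) (Fin m) α) (s : ℕ) : α :=
  ∑ p ∈ antidiagonal s, entryOrZero X p.1 p.2

lemma antidiagSum_transpose (X : Matrix (Fin n) (Fin m) α) :
    antidiagSum Xᵀ = antidiagSum X := by
  ext s
  simp only [antidiagSum, entryOrZero_transpose]
  exact Nat.sum_antidiagonal_swap (f := fun p => entryOrZero X p.1 p.2)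

lemma antidiagSum_of_col_zero {X : Matrix (Fin n) (Fin m) α}
    (hX : ∀ (i : Fin n) (j : Fin m), (j : ℕ) ≠ 0 → X i j = 0) (s : ℕ) :
    antidiagSum X s = entryOrZero X s 0 := by
  rw [antidiagSum, Finset.sum_eq_single (s, 0)]
  · rintro ⟨a, b⟩ hab hne
    rw [Finset.HasAntidiagonal.mem_antidiagonal] at hab
    unfold entryOrZero
    split_ifs
    · refine hX _ _ fun hb => hne ?_
      simp only at hab hb
      simp only [Prod.mk.injEq]
      omega
    · rfl
  · simp

end AntidiagSum

section ShiftSylvester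

variable (α n) in
def shiftMatrix : Matrix (Fin n) (Fin n) α :=
  of fun i j => if (j : ℕ) = i + 1 then 1 else 0

lemma det_one_add_smul_shiftMatrix (c : α) : (1 + c • shiftMatrix α n).det = 1 := by
  rw [det_of_isUpperTriangular]
  · simp [shiftMatrix]
  · intro i j (hij : j < i)
    simp [shiftMatrix, hij.ne', show (j : ℕ) ≠ i + 1 by omega]

lemma isUnit_det_one_sub_smul_shiftMatrix (c : α) : IsUnit (1 - c • shiftMatrix α n).det := by
  rw [sub_eq_add_neg, ← neg_smul, det_one_add_smul_shiftMatrix]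
  exact isUnit_one

lemma transpose_shiftMatrix_mul_apply (R : Matrix (Fin n) (Fin m) α) (i : Fin n) (j : Fin m) :
    ((shiftMatrix α n)ᵀ * R) i j = if (i : ℕ) = 0 then 0 else entryOrZero R (i - 1) j := by
  simp only [mul_apply, transpose_apply, shiftMatrix, of_apply, ite_mul, one_mul, zero_mul]
  split_ifs with hi
  · exact Finset.sum_eq_zero fun k _ => if_neg (by omega)
  · rw [Finset.sum_eq_single ⟨i - 1, by omega⟩
      (fun k _ hk => if_neg fun h => hk (by ext; simp; omega)) (by simp), if_pos (by simp; omega)]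
    simp [entryOrZero, show (i : ℕ) - 1 < n by omega]

lemma mul_shiftMatrix_apply (R : Matrix (Fin n) (Fin m) α) (i : Fin n) (j : Fin m) :
    (R * shiftMatrix α m) i j = if (j : ℕ) = 0 then 0 else entryOrZero R i (j - 1) := by
  simp only [mul_apply, shiftMatrix, of_apply, mul_ite, mul_one, mul_zero]
  split_ifs with hj
  · exact Finset.sum_eq_zero fun k _ => if_neg (by omega)
  · rw [Finset.sum_eq_single ⟨j - 1, by omega⟩
      (fun k _ hk => if_neg fun h => hk (by ext; simp; omega)) (by simp), if_pos (by simp; omega)]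
    simp [entryOrZero, show (j : ℕ) - 1 < m by omega]

def shiftSylvester (R : Matrix (Fin n) (Fin m) α) : Matrix (Fin n) (Fin m) α :=
  (shiftMatrix α n)ᵀ * R - R * shiftMatrix α m

lemma shiftSylvester_sub (R R' : Matrix (Fin n) (Fin m) α) :
    shiftSylvester (R - R') = shiftSylvester R - shiftSylvester R' := by
  simp only [shiftSylvester, Matrix.mul_sub, Matrix.sub_mul]
  abel

lemma shiftSylvester_smul (c : α) (R : Matrix (Fin n) (Fin m) α) :
    shiftSylvester (c • R) = c • shiftSylvester R := by
  simp only [shiftSylvester, Matrix.mul_smul, Matrix.smul_mul, smul_sub]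

lemma transpose_shiftSylvester (R : Matrix (Fin n) (Fin m) α) :
    (shiftSylvester R)ᵀ = shiftSylvester (-Rᵀ) := by
  simp only [shiftSylvester, transpose_sub, transpose_mul, transpose_transpose, Matrix.mul_neg,
    Matrix.neg_mul, sub_neg_eq_add, neg_add_eq_sub]

lemma antidiagSum_shiftSylvester (R : Matrix (Fin n) (Fin m) α) {s : ℕ} (hn : s < n)
    (hm : s < m) : antidiagSum (shiftSylvester R) s = 0 := by
  have hentry : ∀ p ∈ antidiagonal s, entryOrZero (shiftSylvester R) p.1 p.2 =
      (if p.1 = 0 then 0 else entryOrZero R (p.1 - 1) p.2) -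
        (if p.2 = 0 then 0 else entryOrZero R p.1 (p.2 - 1)) := by
    rintro ⟨a, b⟩ hab
    rw [Finset.HasAntidiagonal.mem_antidiagonal] at hab
    have ha : a < n := by omega
    have hb : b < m := by omega
    simpa [shiftSylvester, transpose_shiftMatrix_mul_apply, mul_shiftMatrix_apply] using
      entryOrZero_coe (shiftSylvester R) ⟨a, ha⟩ ⟨b, hb⟩
  rw [antidiagSum, Finset.sum_congr rfl hentry, Finset.sum_sub_distrib, sub_eq_zero]
  cases s with
  | zero => simp
  | succ s =>
    rw [Finset.Nat.sum_antidiagonal_succ, Finset.Nat.sum_antidiagonal_succ']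
    simp

def firstColumn (d : ℕ → α) : Matrix (Fin n) (Fin m) α :=
  of fun i j => if (j : ℕ) = 0 then d i else 0

/-- With these partial anti-diagonal sums, `KᵀR - RK` telescopes to `Y` away from column `0`. -/
def antidiagSolution (Y : Matrix (Fin n) (Fin m) α) : Matrix (Fin n) (Fin m) α :=
  of fun a b => -∑ k ∈ range (a + 1), entryOrZero Y k (a + b + 1 - k)

lemma shiftSylvester_antidiagSolution (Y : Matrix (Fin n) (Fin m) α) :
    shiftSylvester (antidiagSolution Y) = Y - firstColumn (antidiagSum Y) := by
  ext i j
  have hi := i.isLt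
  have hj := j.isLt
  have hrow : (if (i : ℕ) = 0 then 0 else entryOrZero (antidiagSolution Y) (i - 1) j) =
      -∑ k ∈ range i, entryOrZero Y k (i + j - k) := by
    split_ifs with hi0
    · simp [hi0]
    · rw [entryOrZero_of_lt _ (by omega) hj, antidiagSolution, of_apply]
      simp only [Nat.sub_add_cancel (Nat.pos_of_ne_zero hi0)]
      congr! 3
      omega
  have hcol : (if (j : ℕ) = 0 then 0 else entryOrZero (antidiagSolution Y) i (j - 1)) =
      if (j : ℕ) = 0 then 0 else -∑ k ∈ range (i + 1), entryOrZero Y k (i + j - k) := by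
    split_ifs with hj0
    · rfl
    · rw [entryOrZero_of_lt _ hi (by omega), antidiagSolution, of_apply]
      dsimp only
      congr! 4
      omega
  rw [shiftSylvester, sub_apply, sub_apply, transpose_shiftMatrix_mul_apply, mul_shiftMatrix_apply,
    hrow, hcol]
  simp only [firstColumn, of_apply]
  rw [antidiagSum, Finset.Nat.sum_antidiagonal_eq_sum_range_succ_mk, Finset.sum_range_succ,
    Finset.sum_range_succ]
  split_ifs with hj0
  · simp only [← entryOrZero_coe Y i j, hj0, add_zero, Nat.sub_self]
    ring
  · simp [← entryOrZero_coe]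

lemma eq_zero_of_col_zero_of_eq_shiftSylvester (hnm : n ≤ m) {D R : Matrix (Fin n) (Fin m) α}
    (hD : ∀ (i : Fin n) (j : Fin m), (j : ℕ) ≠ 0 → D i j = 0) (hDR : D = shiftSylvester R) :
    D = 0 := by
  ext i j
  by_cases hj : (j : ℕ) = 0
  · rw [← entryOrZero_coe D, hj, ← antidiagSum_of_col_zero hD, hDR,
      antidiagSum_shiftSylvester R i.isLt (by omega), zero_apply]
  · exact hD i j hj

theorem existsUnique_sub_eq_shiftSylvester (Y : Matrix (Fin n) (Fin m) α) :
    ∃! D : Matrix (Fin n) (Fin m) α,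
      ((n ≤ m → ∀ (p : Fin n) (q : Fin m), (q : ℕ) ≠ 0 → D p q = 0) ∧
       (m < n → ∀ (p : Fin n) (q : Fin m), (p : ℕ) ≠ 0 → D p q = 0)) ∧
      ∃ R, Y - D = shiftSylvester R := by
  refine existsUnique_of_exists_of_unique ?_ ?_
  · rcases le_or_gt n m with hnm | hmn
    · refine ⟨firstColumn (antidiagSum Y),
        ⟨fun _ p q hq => if_neg hq, fun h => absurd h (by omega)⟩, antidiagSolution Y, ?_⟩
      rw [shiftSylvester_antidiagSolution]
    · refine ⟨(firstColumn (antidiagSum Y))ᵀ,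
        ⟨fun h => absurd h (by omega), fun _ p q hp => if_neg hp⟩, -(antidiagSolution Yᵀ)ᵀ, ?_⟩
      rw [← transpose_shiftSylvester, shiftSylvester_antidiagSolution, transpose_sub,
        transpose_transpose, antidiagSum_transpose]
  · rintro D₁ D₂ ⟨hV₁, R₁, h₁⟩ ⟨hV₂, R₂, h₂⟩
    have hR : D₁ - D₂ = shiftSylvester (R₂ - R₁) := by
      rw [shiftSylvester_sub, ← h₁, ← h₂]
      abel
    rw [← sub_eq_zero]
    rcases le_or_gt n m with hnm | hmn
    · refine eq_zero_of_col_zero_of_eq_shiftSylvester hnm (fun p q hq => ?_) hR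
      rw [sub_apply, hV₁.1 hnm p q hq, hV₂.1 hnm p q hq, sub_zero]
    · refine transpose_eq_zero.mp
        (eq_zero_of_col_zero_of_eq_shiftSylvester hmn.le (fun q p hp => ?_)
          (by rw [hR, transpose_shiftSylvester]))
      rw [transpose_apply, sub_apply, hV₁.2 hmn p q hp, hV₂.2 hmn p q hp, sub_zero]

lemma one_add_smul_mul_one_sub_smul_sub {p q : Type*} [Fintype p] [DecidableEq p] [Fintype q]
    [DecidableEq q] (c : α) (K : Matrix q q α) (L : Matrix p p α) (X : Matrix q p α) :
    (1 + c • K) * X * (1 - c • L) - (1 - c • K) * X * (1 + c • L) = (2 * c) • (K * X - X * L) := by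
  simp only [Matrix.add_mul, Matrix.sub_mul, Matrix.mul_add, Matrix.mul_sub, Matrix.one_mul,
    Matrix.mul_one, Matrix.smul_mul, Matrix.mul_smul]
  module

end ShiftSylvester

section Flip

variable (α n) in
def flipMatrix : Matrix (Fin n) (Fin n) α := (Fin.revPerm : Equiv.Perm (Fin n)).permMatrix α

lemma flipMatrix_mul_apply (X : Matrix (Fin n) (Fin m) α) (i : Fin n) (j : Fin m) :
    (flipMatrix α n * X) i j = X i.rev j := by
  simp [flipMatrix, PEquiv.toMatrix_toPEquiv_mul]

lemma flipMatrix_mul_self : flipMatrix α n * flipMatrix α n = 1 := by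
  ext i j
  rw [flipMatrix_mul_apply]
  simp [flipMatrix, one_apply]

lemma flipMatrix_mul_shiftMatrix :
    flipMatrix α n * shiftMatrix α n = (shiftMatrix α n)ᵀ * flipMatrix α n := by
  ext i j
  rw [flipMatrix_mul_apply, flipMatrix, PEquiv.mul_toMatrix_toPEquiv]
  simp only [shiftMatrix, submatrix_apply, transpose_apply, of_apply, id, Fin.revPerm_symm,
    Fin.revPerm_apply, Fin.val_rev]
  have := i.isLt
  have := j.isLt
  congr 1
  exact propext (by omega)

lemma flipMatrix_mul_shiftSylvester (R : Matrix (Fin n) (Fin m) α) :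
    flipMatrix α n * (shiftMatrix α n * R - R * shiftMatrix α m) =
      shiftSylvester (flipMatrix α n * R) := by
  rw [shiftSylvester, Matrix.mul_sub, ← Matrix.mul_assoc, flipMatrix_mul_shiftMatrix,
    Matrix.mul_assoc, Matrix.mul_assoc]

end Flip

end Matrix

lemma Dmat_eq (n : ℕ) : Dmat n = flipMatrix ℂ n * (1 + I • shiftMatrix ℂ n) := by
  ext i j
  rw [flipMatrix_mul_apply]
  simp only [Dmat, shiftMatrix, of_apply, Matrix.add_apply, Matrix.smul_apply, one_apply,
    Fin.ext_iff, Fin.val_rev, smul_eq_mul, mul_ite, mul_one, mul_zero]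
  have := i.isLt
  have := j.isLt
  split_ifs <;> first | rfl | omega | simp

lemma conjTranspose_Dmat (n : ℕ) : (Dmat n)ᴴ = flipMatrix ℂ n * (1 - I • shiftMatrix ℂ n) := by
  ext i j
  rw [flipMatrix_mul_apply]
  simp only [Dmat, shiftMatrix, conjTranspose_apply, of_apply, Matrix.sub_apply, Matrix.smul_apply,
    one_apply, Fin.ext_iff, Fin.val_rev, smul_eq_mul, mul_ite, mul_one, mul_zero]
  have := i.isLt
  have := j.isLt
  split_ifs <;> first | rfl | omega | simp

lemma isUnit_det_Dmat (n : ℕ) : IsUnit (Dmat n).det := by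
  rw [Dmat_eq, det_mul, det_one_add_smul_shiftMatrix, mul_one]
  exact isUnit_det_of_right_inverse flipMatrix_mul_self

lemma isUnit_det_smul_Dmat {μ : ℂ} (hμ : μ ≠ 0) (n : ℕ) : IsUnit (μ • Dmat n).det := by
  rw [det_smul]
  exact (hμ.isUnit.pow _).mul (isUnit_det_Dmat n)

lemma mem_Tpair_iff {p q : Type*} [Fintype p] [DecidableEq p] [Fintype q] {M : Matrix p p ℂ}
    (hM : IsUnit M.det) (N : Matrix q q ℂ) (Z : Matrix q p ℂ) (A : Matrix p q ℂ) :
    (Z, A) ∈ Tpair M N ↔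
      ∃ R : Matrix q p ℂ, Z - Aᴴ * (Mᴴ⁻¹ * M) = N * R - Nᴴ * R * (Mᴴ⁻¹ * M) := by
  have hMH : Mᴴ * (Mᴴ⁻¹ * M) = M :=
    mul_nonsing_inv_cancel_left _ _ (by rw [det_conjTranspose]; exact hM.star)
  constructor
  · rintro ⟨S, R, hZA⟩
    obtain ⟨rfl, rfl⟩ := Prod.ext_iff.mp hZA
    refine ⟨R, ?_⟩
    simp only [conjTranspose_add, conjTranspose_mul, conjTranspose_conjTranspose, Matrix.add_mul,
      Matrix.mul_assoc, hMH]
    abel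
  · rintro ⟨R, hR⟩
    refine ⟨M⁻¹ * (A - Rᴴ * N), R, Prod.ext ?_ ?_⟩
    · simp only [conjTranspose_mul, conjTranspose_sub, conjTranspose_nonsing_inv,
        conjTranspose_conjTranspose, Matrix.mul_assoc, Matrix.sub_mul] at hR ⊢
      rw [sub_eq_iff_eq_add.mp hR]
      abel
    · simp only [mul_nonsing_inv_cancel_left _ _ hM, add_sub_cancel]

section UnitScalars

variable {m n : ℕ} {μ ν : ℂ}

lemma conjTranspose_inv_mul_smul_Dmat (hμ : ‖μ‖ = 1) :
    (μ • Dmat m)ᴴ⁻¹ * (μ • Dmat m) =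
      μ ^ 2 • ((1 - I • shiftMatrix ℂ m)⁻¹ * (1 + I • shiftMatrix ℂ m)) := by
  have hμμ : starRingEnd ℂ μ * μ ^ 2 = μ := by
    rw [pow_two, ← mul_assoc, conj_mul', hμ]
    simp
  have hfactor : (μ • Dmat m)ᴴ *
      (μ ^ 2 • ((1 - I • shiftMatrix ℂ m)⁻¹ * (1 + I • shiftMatrix ℂ m))) = μ • Dmat m := by
    rw [conjTranspose_smul, conjTranspose_Dmat, Dmat_eq, smul_mul_smul_comm, Complex.star_def, hμμ,
      Matrix.mul_assoc, mul_nonsing_inv_cancel_left _ _ (isUnit_det_one_sub_smul_shiftMatrix I)]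
  have hunit : IsUnit (μ • Dmat m)ᴴ.det := by
    rw [det_conjTranspose]
    exact (isUnit_det_smul_Dmat (by rintro rfl; simp at hμ) m).star
  conv_rhs => rw [← nonsing_inv_mul_cancel_left _ (μ ^ 2 • _) hunit, hfactor]

lemma smul_Dmat_mul_sub_conjTranspose_mul (hν : ‖ν‖ = 1) (hμν : μ ^ 2 = ν ^ 2)
    (R : Matrix (Fin n) (Fin m) ℂ) :
    (ν • Dmat n) * (R * (1 - I • shiftMatrix ℂ m)) -
        (ν • Dmat n)ᴴ * (R * (1 - I • shiftMatrix ℂ m)) *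
          (μ ^ 2 • ((1 - I • shiftMatrix ℂ m)⁻¹ * (1 + I • shiftMatrix ℂ m))) =
      (2 * I * ν) • shiftSylvester (flipMatrix ℂ n * R) := by
  have hνμ : starRingEnd ℂ ν * μ ^ 2 = ν := by
    rw [hμν, pow_two, ← mul_assoc, conj_mul', hν]
    simp
  have hcancel : R * (1 - I • shiftMatrix ℂ m) *
      ((1 - I • shiftMatrix ℂ m)⁻¹ * (1 + I • shiftMatrix ℂ m)) =
        R * (1 + I • shiftMatrix ℂ m) := by
    rw [Matrix.mul_assoc, mul_nonsing_inv_cancel_left _ _ (isUnit_det_one_sub_smul_shiftMatrix I)]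
  calc _ = ν • (flipMatrix ℂ n * ((1 + I • shiftMatrix ℂ n) * R * (1 - I • shiftMatrix ℂ m) -
        (1 - I • shiftMatrix ℂ n) * R * (1 + I • shiftMatrix ℂ m))) := by
        rw [conjTranspose_smul, conjTranspose_Dmat, Dmat_eq, Complex.star_def, Matrix.mul_smul,
          Matrix.mul_assoc _ (R * _), hcancel, Matrix.smul_mul, Matrix.smul_mul, smul_smul,
          mul_comm, hνμ, ← smul_sub]
        conv_rhs => rw [Matrix.mul_sub]
        simp only [Matrix.mul_assoc]
    _ = (2 * I * ν) • shiftSylvester (flipMatrix ℂ n * R) := by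
      rw [one_add_smul_mul_one_sub_smul_sub, Matrix.mul_smul, flipMatrix_mul_shiftSylvester,
        smul_smul, mul_comm ν]

lemma mem_Tpair_smul_Dmat_iff (hμ : ‖μ‖ = 1) (hν : ‖ν‖ = 1) (hμν : μ ^ 2 = ν ^ 2)
    (Z : Matrix (Fin n) (Fin m) ℂ) (A : Matrix (Fin m) (Fin n) ℂ) :
    (Z, A) ∈ Tpair (μ • Dmat m) (ν • Dmat n) ↔
      ∃ R, Z - Aᴴ * (μ ^ 2 • ((1 - I • shiftMatrix ℂ m)⁻¹ * (1 + I • shiftMatrix ℂ m))) =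
        shiftSylvester R := by
  have hQ := isUnit_det_one_sub_smul_shiftMatrix (n := m) I
  have hc : 2 * I * ν ≠ 0 := by
    have : ν ≠ 0 := by rintro rfl; simp at hν
    simp [this, I_ne_zero]
  rw [mem_Tpair_iff (isUnit_det_smul_Dmat (by rintro rfl; simp at hμ) m),
    conjTranspose_inv_mul_smul_Dmat hμ]
  constructor
  · rintro ⟨R, hR⟩
    refine ⟨(2 * I * ν) • (flipMatrix ℂ n * (R * (1 - I • shiftMatrix ℂ m)⁻¹)), ?_⟩
    rw [hR, shiftSylvester_smul, ← smul_Dmat_mul_sub_conjTranspose_mul hν hμν,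
      nonsing_inv_mul_cancel_right _ _ hQ]
  · rintro ⟨R, hR⟩
    refine ⟨(2 * I * ν)⁻¹ • (flipMatrix ℂ n * R) * (1 - I • shiftMatrix ℂ m), ?_⟩
    rw [hR, smul_Dmat_mul_sub_conjTranspose_mul hν hμν, Matrix.mul_smul, ← Matrix.mul_assoc,
      flipMatrix_mul_self, Matrix.one_mul, shiftSylvester_smul, smul_smul, mul_inv_cancel₀ hc,
      one_smul]

end UnitScalars

/-- For `|μ| = |ν| = 1` and `μ = ±ν`:
`ℂ^{n×m} × ℂ^{m×n} = T(μΔ_m, νΔ_n) ⊕_ℝ (V × {0})`, where `V` consists of the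
matrices supported in the first column if `n ≤ m` and in the first row if
`n > m`. -/
theorem stmt14 (m n : ℕ) (μ ν : ℂ)
    (hμ : ‖μ‖ = 1) (hν : ‖ν‖ = 1)
    (h : μ = ν ∨ μ = -ν)
    (B : Matrix (Fin n) (Fin m) ℂ) (A : Matrix (Fin m) (Fin n) ℂ) :
    ∃! D : Matrix (Fin n) (Fin m) ℂ,
      ((n ≤ m → ∀ (p : Fin n) (q : Fin m), (q : ℕ) ≠ 0 → D p q = 0) ∧
       (m < n → ∀ (p : Fin n) (q : Fin m), (p : ℕ) ≠ 0 → D p q = 0)) ∧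
      (B - D, A) ∈ Tpair (μ • Dmat m) (ν • Dmat n) := by
  have hμν : μ ^ 2 = ν ^ 2 := by rcases h with rfl | rfl <;> ring
  refine (existsUnique_congr fun D => and_congr_right fun _ => ?_).mpr
    (existsUnique_sub_eq_shiftSylvester
      (B - Aᴴ * (μ ^ 2 • ((1 - I • shiftMatrix ℂ m)⁻¹ * (1 + I • shiftMatrix ℂ m)))))
  rw [mem_Tpair_smul_Dmat_iff hμ hν hμν, sub_right_comm]
end

section
/- Let m ≥ n with n odd. Let V ⊆ ℂ^{n×m} be the complex subspace of matrices whose nonzero entries are confined to the first-column positions (n−2t, 1) for 0 ≤ t ≤ (n−1)/2 together with the last-row positions (n, j) for n+2 ≤ j ≤ m, and let W ⊆ ℂ^{m×n} be the complex subspace of matrices whose nonzero entries are confined to the last-row positions (m, 2t+1) for 0 ≤ t ≤ (n−1)/2. Then for every pair (B,A) ∈ ℂ^{n×m} × ℂ^{m×n} there exists exactly one pair (D,E) ∈ V × W such that (B − D, A − E) ∈ T(J_m(0), J_n(0)); that is, ℂ^{n×m} × ℂ^{m×n} = T(J_m(0), J_n(0)) ⊕_ℝ (V × W). -/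
open Matrix

lemma Jmat_zero_apply (n : ℕ) (i j : Fin n) :
    Jmat n 0 i j = if (j : ℕ) = (i : ℕ) + 1 then 1 else 0 := by
  simp only [Jmat, Matrix.of_apply]
  split_ifs with h1 h2 <;> first | rfl | omega

lemma mul_J_apply {k m : ℕ} (P : Matrix (Fin k) (Fin m) ℂ) (i : Fin k) (j : Fin m) :
    (P * Jmat m 0) i j = if h : 1 ≤ (j : ℕ) then P i ⟨(j : ℕ) - 1, by omega⟩ else 0 := by
  rw [Matrix.mul_apply]
  by_cases hj : 1 ≤ (j : ℕ)
  · rw [dif_pos hj]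
    rw [Finset.sum_eq_single (⟨(j : ℕ) - 1, by omega⟩ : Fin m)]
    · rw [Jmat_zero_apply, if_pos (by simp; omega), mul_one]
    · intro b _ hb
      rw [Jmat_zero_apply, if_neg, mul_zero]
      intro hc; apply hb; apply Fin.ext; simp; omega
    · intro h; exact absurd (Finset.mem_univ _) h
  · rw [dif_neg hj]
    apply Finset.sum_eq_zero
    intro b _
    rw [Jmat_zero_apply, if_neg (by omega), mul_zero]

lemma J_mul_apply {k n : ℕ} (Q : Matrix (Fin n) (Fin k) ℂ) (i : Fin n) (j : Fin k) :
    (Jmat n 0 * Q) i j = if h : (i : ℕ) + 1 < n then Q ⟨(i : ℕ) + 1, h⟩ j else 0 := by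
  rw [Matrix.mul_apply]
  by_cases hi : (i : ℕ) + 1 < n
  · rw [dif_pos hi]
    rw [Finset.sum_eq_single (⟨(i : ℕ) + 1, hi⟩ : Fin n)]
    · rw [Jmat_zero_apply, if_pos (by simp), one_mul]
    · intro b _ hb
      rw [Jmat_zero_apply, if_neg, zero_mul]
      intro hc; apply hb; apply Fin.ext; simp; omega
    · intro h; exact absurd (Finset.mem_univ _) h
  · rw [dif_neg hi]
    apply Finset.sum_eq_zero
    intro b _
    rw [Jmat_zero_apply, if_neg (by omega), zero_mul]

noncomputable def cW (g : ℕ → ℂ) (w0 : ℂ) : ℕ → ℂ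
  | 0 => w0
  | s+1 => star (g s) - star (cW g w0 s)

noncomputable def gOne (Ax Bx : ℕ → ℕ → ℂ) (a t : ℕ) : ℂ :=
  if t % 2 = 0 then Ax t (a+t+1) else Bx (a+t) (t+1)

noncomputable def gTwo (Ax Bx : ℕ → ℕ → ℂ) (b t : ℕ) : ℂ :=
  if t % 2 = 0 then Ax (b+t) (t+1) else Bx t (b+t+1)

noncomputable def gFour (Ax Bx : ℕ → ℕ → ℂ) (i t : ℕ) : ℂ :=
  if t % 2 = 0 then Bx (i+t) (t+1) else Ax t (i+t+1)

noncomputable def sg (n : ℕ) (Ax Bx : ℕ → ℕ → ℂ) (i : ℕ) : ℂ :=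
  if i % 2 = 0 then cW (fun s => gFour Ax Bx i (n-i-2-s)) (star (Bx (n-1) (n-i))) (n-i-1) else 0

noncomputable def dl (n : ℕ) (Ax Bx : ℕ → ℕ → ℂ) (i : ℕ) : ℂ :=
  if i % 2 = 1 then 0
  else if i+1 = n then Bx (n-1) 0
  else Bx i 0 - cW (fun s => gOne Ax Bx (i+1) (n-i-3-s)) (star (Bx (n-1) (n-i-1))) (n-i-2)

noncomputable def rh (m n : ℕ) (Ax Bx : ℕ → ℕ → ℂ) (b : ℕ) : ℂ :=
  if (m-b) % 2 = 1 ∧ m-b < n then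
    cW (fun s => gTwo Ax Bx b (m-b-2-s)) (star (Ax (m-1) (m-b))) (m-b-1) else 0

noncomputable def G (m n : ℕ) (Ax Bx : ℕ → ℕ → ℂ) : Bool → ℕ → ℕ → ℂ
  | true, 0, b => sg n Ax Bx b
  | true, a+1, 0 => Ax a 0
  | true, a+1, b+1 => Ax a (b+1) - star (G m n Ax Bx false b a)
  | false, 0, b => rh m n Ax Bx b
  | false, a+1, 0 => Bx a 0 - dl n Ax Bx a
  | false, a+1, b+1 => Bx a (b+1) - star (G m n Ax Bx true b a)
  termination_by tag a b => a + b

lemma chain_main (g : ℕ → ℂ) (w0 : ℂ) (T : ℕ) (u : ℕ → ℂ)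
    (h0 : u 0 = cW (fun s => g (T-2-s)) w0 (T-1))
    (hrec : ∀ t, u (t+1) = g t - star (u t)) :
    u (T-1) = w0 := by
  have key : ∀ t, t ≤ T-1 → u t = cW (fun s => g (T-2-s)) w0 (T-1-t) := by
    intro t
    induction t with
    | zero => intro _; simpa using h0
    | succ t ih =>
      intro h
      have ht : t ≤ T - 1 := by omega
      have h2 : T-1-t = (T-1-(t+1))+1 := by omega
      rw [hrec t, ih ht, h2, cW]
      have h3 : T-2-(T-1-(t+1)) = t := by omega
      rw [h3, star_sub, star_star, star_star]
      ring
  have := key (T-1) le_rfl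
  rw [Nat.sub_self] at this
  rw [this, cW]

lemma zchain_fwd (u : ℕ → ℂ) (T : ℕ) (h0 : u 0 = 0)
    (hrec : ∀ t, t < T → star (u t) + u (t+1) = 0) :
    ∀ t, t ≤ T → u t = 0 := by
  intro t
  induction t with
  | zero => intro _; exact h0
  | succ t ih =>
    intro h
    have := hrec t (by omega)
    rw [ih (by omega)] at this
    simpa using this

lemma zchain_bwd (u : ℕ → ℂ) (T : ℕ) (hT : u T = 0)
    (hrec : ∀ t, t < T → star (u t) + u (t+1) = 0) :
    u 0 = 0 := by
  have key : ∀ s, s ≤ T → u (T-s) = 0 := by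
    intro s
    induction s with
    | zero => intro _; simpa using hT
    | succ s ih =>
      intro h
      have h1 := hrec (T-s-1) (by omega)
      have h2 : T-s-1+1 = T-s := by omega
      rw [h2, ih (by omega), add_zero] at h1
      have : u (T-s-1) = 0 := by
        have := congrArg star h1
        simpa using this
      have h3 : T-(s+1) = T-s-1 := by omega
      rw [h3]; exact this
  have := key T le_rfl
  simpa using this

section Families
variable (m n : ℕ) (Ax Bx : ℕ → ℕ → ℂ)

noncomputable def uOne (a t : ℕ) : ℂ :=
  if t % 2 = 0 then G m n Ax Bx false (a+t) t else G m n Ax Bx true t (a+t)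

noncomputable def uTwo (b t : ℕ) : ℂ :=
  if t % 2 = 0 then G m n Ax Bx false t (b+t) else G m n Ax Bx true (b+t) t

noncomputable def uFour (i t : ℕ) : ℂ :=
  if t % 2 = 0 then G m n Ax Bx true t (i+t) else G m n Ax Bx false (i+t) t

lemma uFour_rec (i t : ℕ) :
    uFour m n Ax Bx i (t+1) = gFour Ax Bx i t - star (uFour m n Ax Bx i t) := by
  rcases Nat.mod_two_eq_zero_or_one t with h | h
  · have h1 : (t+1) % 2 = 1 := by omega
    rw [uFour, uFour, if_neg (by omega), if_pos h, gFour, if_pos h]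
    have h2 : i + (t+1) = (i+t)+1 := by omega
    rw [h2, G]
  · have h1 : (t+1) % 2 = 0 := by omega
    rw [uFour, uFour, if_pos h1, if_neg (by omega), gFour, if_neg (by omega)]
    have h2 : i + (t+1) = (i+t)+1 := by omega
    rw [h2, G]

lemma uOne_rec (a t : ℕ) :
    uOne m n Ax Bx a (t+1) = gOne Ax Bx a t - star (uOne m n Ax Bx a t) := by
  rcases Nat.mod_two_eq_zero_or_one t with h | h
  · have h1 : (t+1) % 2 = 1 := by omega
    rw [uOne, uOne, if_neg (by omega), if_pos h, gOne, if_pos h]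
    have h2 : a + (t+1) = (a+t)+1 := by omega
    rw [h2, G]
  · have h1 : (t+1) % 2 = 0 := by omega
    rw [uOne, uOne, if_pos h1, if_neg (by omega), gOne, if_neg (by omega)]
    have h2 : a + (t+1) = (a+t)+1 := by omega
    rw [h2, G]

lemma uTwo_rec (b t : ℕ) :
    uTwo m n Ax Bx b (t+1) = gTwo Ax Bx b t - star (uTwo m n Ax Bx b t) := by
  rcases Nat.mod_two_eq_zero_or_one t with h | h
  · have h1 : (t+1) % 2 = 1 := by omega
    rw [uTwo, uTwo, if_neg (by omega), if_pos h, gTwo, if_pos h]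
    have h2 : b + (t+1) = (b+t)+1 := by omega
    rw [h2, G]
  · have h1 : (t+1) % 2 = 0 := by omega
    rw [uTwo, uTwo, if_pos h1, if_neg (by omega), gTwo, if_neg (by omega)]
    have h2 : b + (t+1) = (b+t)+1 := by omega
    rw [h2, G]

lemma fam4 (hn : n % 2 = 1) (i0 : ℕ) (h2 : i0 % 2 = 0) (hlt : i0 < n) :
    G m n Ax Bx true (n-i0-1) (n-1) = star (Bx (n-1) (n-i0)) := by
  have h0 : uFour m n Ax Bx i0 0
      = cW (fun s => gFour Ax Bx i0 (n-i0-2-s)) (star (Bx (n-1) (n-i0))) (n-i0-1) := by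
    rw [uFour, if_pos rfl, Nat.add_zero, G, sg, if_pos h2]
  have key := chain_main (gFour Ax Bx i0) (star (Bx (n-1) (n-i0))) (n-i0)
    (uFour m n Ax Bx i0) h0 (uFour_rec m n Ax Bx i0)
  rw [uFour, if_pos (by omega)] at key
  have e : i0 + (n-i0-1) = n-1 := by omega
  rw [e] at key
  exact key

lemma fam1 (hn : n % 2 = 1) (a : ℕ) (h2 : a % 2 = 1) (hlt : a < n) :
    G m n Ax Bx true (n-a-1) (n-1) = star (Bx (n-1) (n-a)) := by
  have e1 : a - 1 + 1 = a := by omega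
  have h0 : uOne m n Ax Bx a 0
      = cW (fun s => gOne Ax Bx a (n-a-2-s)) (star (Bx (n-1) (n-a))) (n-a-1) := by
    rw [uOne, if_pos rfl, Nat.add_zero]
    conv_lhs => rw [← e1]
    rw [G, dl, if_neg (by omega), if_neg (by omega)]
    have e2 : n - (a-1) - 3 = n-a-2 := by omega
    have e3 : n - (a-1) - 1 = n-a := by omega
    have e4 : n - (a-1) - 2 = n-a-1 := by omega
    rw [e1, e2, e3, e4]; ring
  have key := chain_main (gOne Ax Bx a) (star (Bx (n-1) (n-a))) (n-a)
    (uOne m n Ax Bx a) h0 (uOne_rec m n Ax Bx a)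
  rw [uOne, if_neg (by omega)] at key
  have e : a + (n-a-1) = n-1 := by omega
  rw [e] at key
  exact key

lemma fam2 (b : ℕ) (h2 : (m-b) % 2 = 1) (hlt : m-b < n) :
    G m n Ax Bx false (m-b-1) (m-1) = star (Ax (m-1) (m-b)) := by
  have h0 : uTwo m n Ax Bx b 0
      = cW (fun s => gTwo Ax Bx b (m-b-2-s)) (star (Ax (m-1) (m-b))) (m-b-1) := by
    rw [uTwo, if_pos rfl, Nat.add_zero, G, rh, if_pos ⟨h2, hlt⟩]
  have key := chain_main (gTwo Ax Bx b) (star (Ax (m-1) (m-b))) (m-b)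
    (uTwo m n Ax Bx b) h0 (uTwo_rec m n Ax Bx b)
  rw [uTwo, if_pos (by omega)] at key
  have e : b + (m-b-1) = m-1 := by omega
  rw [e] at key
  exact key

lemma H1 (hn : n % 2 = 1) (j : ℕ) (hj1 : 1 ≤ j) (hj2 : j ≤ n) :
    G m n Ax Bx true (j-1) (n-1) = star (Bx (n-1) j) := by
  rcases Nat.mod_two_eq_zero_or_one j with h | h
  · have := fam1 m n Ax Bx hn (n-j) (by omega) (by omega)
    have e1 : n-(n-j)-1 = j-1 := by omega
    have e2 : n-(n-j) = j := by omega
    rwa [e1, e2] at this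
  · have := fam4 m n Ax Bx hn (n-j) (by omega) (by omega)
    have e1 : n-(n-j)-1 = j-1 := by omega
    have e2 : n-(n-j) = j := by omega
    rwa [e1, e2] at this

lemma H2 (hmn : n ≤ m) (j : ℕ) (hj1 : j % 2 = 1) (hj2 : j < n) :
    G m n Ax Bx false (j-1) (m-1) = star (Ax (m-1) j) := by
  have := fam2 m n Ax Bx (m-j) (by omega) (by omega)
  have e1 : m-(m-j)-1 = j-1 := by omega
  have e2 : m-(m-j) = j := by omega
  rwa [e1, e2] at this

end Families

section Klemmas
variable (m n : ℕ) (Ax Bx : ℕ → ℕ → ℂ)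

lemma G_false_succ (a b : ℕ) (ha : 1 ≤ a) (hb : 1 ≤ b) :
    G m n Ax Bx false a b = Bx (a-1) b - star (G m n Ax Bx true (b-1) (a-1)) := by
  obtain ⟨a', rfl⟩ : ∃ a', a = a'+1 := ⟨a-1, by omega⟩
  obtain ⟨b', rfl⟩ : ∃ b', b = b'+1 := ⟨b-1, by omega⟩
  rw [G]; simp

lemma G_true_succ (a b : ℕ) (ha : 1 ≤ a) (hb : 1 ≤ b) :
    G m n Ax Bx true a b = Ax (a-1) b - star (G m n Ax Bx false (b-1) (a-1)) := by
  obtain ⟨a', rfl⟩ : ∃ a', a = a'+1 := ⟨a-1, by omega⟩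
  obtain ⟨b', rfl⟩ : ∃ b', b = b'+1 := ⟨b-1, by omega⟩
  rw [G]; simp

lemma G_false_zero (a : ℕ) (ha : 1 ≤ a) :
    G m n Ax Bx false a 0 = Bx (a-1) 0 - dl n Ax Bx (a-1) := by
  obtain ⟨a', rfl⟩ : ∃ a', a = a'+1 := ⟨a-1, by omega⟩
  rw [G]; simp

lemma G_true_zero (a : ℕ) (ha : 1 ≤ a) :
    G m n Ax Bx true a 0 = Ax (a-1) 0 := by
  obtain ⟨a', rfl⟩ : ∃ a', a = a'+1 := ⟨a-1, by omega⟩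
  rw [G]; simp

noncomputable def Dx (i j : ℕ) : ℂ :=
  if j = 0 then dl n Ax Bx i
  else if i = n-1 then Bx (n-1) j - star (G m n Ax Bx true (j-1) (n-1)) else 0

noncomputable def Ex (i j : ℕ) : ℂ :=
  if i = m-1 then
    Ax (m-1) j - (if 1 ≤ j then star (G m n Ax Bx false (j-1) (m-1)) else 0) else 0

lemma K1 (hn : n % 2 = 1) (i j : ℕ) (hi : i < n) (hj : j < m) :
    Bx i j - Dx m n Ax Bx i j
      = (if 1 ≤ j then star (G m n Ax Bx true (j-1) i) else 0)
        + (if i+1 < n then G m n Ax Bx false (i+1) j else 0) := by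
  by_cases hj0 : j = 0
  · subst hj0
    rw [Dx, if_pos rfl, if_neg (by omega)]
    by_cases hin : i+1 < n
    · rw [if_pos hin, G_false_zero m n Ax Bx (i+1) (by omega)]
      simp only [Nat.add_sub_cancel]; ring
    · rw [if_neg hin]
      have e : i = n-1 := by omega
      subst e
      rw [dl, if_neg (by omega), if_pos (by omega)]; ring
  · by_cases hin : i+1 < n
    · rw [Dx, if_neg hj0, if_neg (by omega : ¬ i = n-1),
        if_pos (by omega : 1 ≤ j), if_pos hin,
        G_false_succ m n Ax Bx (i+1) j (by omega) (by omega)]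
      simp only [Nat.add_sub_cancel]; ring
    · have e : i = n-1 := by omega
      subst e
      rw [Dx, if_neg hj0, if_pos rfl, if_pos (by omega : 1 ≤ j), if_neg hin]; ring

lemma K2 (i j : ℕ) (hi : i < m) (hj : j < n) :
    Ax i j - Ex m n Ax Bx i j
      = (if 1 ≤ j then star (G m n Ax Bx false (j-1) i) else 0)
        + (if i+1 < m then G m n Ax Bx true (i+1) j else 0) := by
  by_cases him : i+1 < m
  · rw [Ex, if_neg (by omega : ¬ i = m-1), if_pos him]
    by_cases hj0 : j = 0
    · subst hj0
      rw [if_neg (by omega), G_true_zero m n Ax Bx (i+1) (by omega)]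
      simp only [Nat.add_sub_cancel]; ring
    · rw [if_pos (by omega : 1 ≤ j),
        G_true_succ m n Ax Bx (i+1) j (by omega) (by omega)]
      simp only [Nat.add_sub_cancel]; ring
  · have e : i = m-1 := by omega
    subst e
    rw [Ex, if_pos rfl, if_neg him]; ring

end Klemmas

noncomputable def AxF (m n : ℕ) (A : Matrix (Fin m) (Fin n) ℂ) : ℕ → ℕ → ℂ :=
  fun i j => if h : i < m ∧ j < n then A ⟨i, h.1⟩ ⟨j, h.2⟩ else 0

lemma AxF_eq {m n : ℕ} (A : Matrix (Fin m) (Fin n) ℂ) (i : Fin m) (j : Fin n) :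
    AxF m n A (i : ℕ) (j : ℕ) = A i j := by
  rw [AxF, dif_pos ⟨i.isLt, j.isLt⟩]

lemma pair_entry1 {m n : ℕ} (Sm : Matrix (Fin m) (Fin n) ℂ) (Rm : Matrix (Fin n) (Fin m) ℂ)
    (i : Fin n) (j : Fin m) :
    (Smᴴ * Jmat m 0 + Jmat n 0 * Rm) i j
      = (if h : 1 ≤ (j : ℕ) then star (Sm ⟨(j : ℕ) - 1, by omega⟩ i) else 0)
        + (if h : (i : ℕ) + 1 < n then Rm ⟨(i : ℕ) + 1, h⟩ j else 0) := by
  rw [Matrix.add_apply, mul_J_apply, J_mul_apply]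
  congr 1

lemma bridge1 {m n : ℕ} (D : Matrix (Fin n) (Fin m) ℂ) (s : Matrix (Fin m) (Fin n) ℂ)
    (r : Matrix (Fin n) (Fin m) ℂ)
    (h : D = sᴴ * Jmat m 0 + Jmat n 0 * r) (i j : ℕ) (hi : i < n) (hj : j < m) :
    AxF n m D i j
      = (if 1 ≤ j then star (AxF m n s (j-1) i) else 0)
        + (if i+1 < n then AxF n m r (i+1) j else 0) := by
  rw [AxF, dif_pos ⟨hi, hj⟩, h, pair_entry1]
  congr 1
  · by_cases h1 : 1 ≤ j
    · rw [dif_pos h1, if_pos h1, AxF, dif_pos ⟨by omega, hi⟩]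
    · rw [dif_neg h1, if_neg h1]
  · by_cases h2 : i+1 < n
    · rw [dif_pos h2, if_pos h2, AxF, dif_pos ⟨h2, hj⟩]
    · rw [dif_neg h2, if_neg h2]

lemma bridge1' {m n : ℕ} (Bm D : Matrix (Fin n) (Fin m) ℂ) (s : Matrix (Fin m) (Fin n) ℂ)
    (r : Matrix (Fin n) (Fin m) ℂ)
    (hK : ∀ i j, i < n → j < m →
      AxF n m Bm i j - AxF n m D i j
        = (if 1 ≤ j then star (AxF m n s (j-1) i) else 0)
          + (if i+1 < n then AxF n m r (i+1) j else 0)) :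
    Bm - D = sᴴ * Jmat m 0 + Jmat n 0 * r := by
  ext i j
  rw [Matrix.sub_apply, pair_entry1]
  have hK' := hK (i : ℕ) (j : ℕ) i.isLt j.isLt
  rw [AxF_eq, AxF_eq] at hK'
  rw [hK']
  congr 1
  · by_cases h1 : 1 ≤ (j : ℕ)
    · rw [dif_pos h1, if_pos h1, AxF, dif_pos ⟨by omega, i.isLt⟩]
    · rw [dif_neg h1, if_neg h1]
  · by_cases h2 : (i : ℕ)+1 < n
    · rw [dif_pos h2, if_pos h2, AxF, dif_pos ⟨h2, j.isLt⟩]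
    · rw [dif_neg h2, if_neg h2]

noncomputable def uh (f g : ℕ → ℕ → ℂ) (d t : ℕ) : ℂ :=
  if t % 2 = 0 then f (d+t) t else g t (d+t)

section Hom
variable (m n : ℕ) (hmn : n ≤ m) (hn : n % 2 = 1) (s' r' Dn En : ℕ → ℕ → ℂ)
  (h1 : ∀ i j, i < n → j < m →
    Dn i j = (if 1 ≤ j then star (s' (j-1) i) else 0) + (if i+1 < n then r' (i+1) j else 0))
  (h2 : ∀ i j, i < m → j < n →
    En i j = (if 1 ≤ j then star (r' (j-1) i) else 0) + (if i+1 < m then s' (i+1) j else 0))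
  (hsD : ∀ i j, i < n → j < m → Dn i j ≠ 0 → (j = 0 ∧ i % 2 = 0) ∨ (i+1 = n ∧ n+1 ≤ j))
  (hsE : ∀ i j, i < m → j < n → En i j ≠ 0 → i+1 = m ∧ j % 2 = 0)

include h1 h2 hsD hsE hmn hn

lemma homD : ∀ i j, i < n → j < m → Dn i j = 0 := by
  have hDz : ∀ i j, i < n → j < m → 1 ≤ j → (i+1 < n ∨ j ≤ n) → Dn i j = 0 := by
    intro i j hi hj hj1 hd
    by_contra hne
    rcases hsD i j hi hj hne with ⟨h, _⟩ | ⟨h, h'⟩ <;> omega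
  have hEz : ∀ i j, i < m → j < n → (i+1 < m ∨ j % 2 = 1) → En i j = 0 := by
    intro i j hi hj hd
    by_contra hne
    obtain ⟨h, h'⟩ := hsE i j hi hj hne
    rcases hd with h'' | h'' <;> omega
  intro i j hi hj
  by_contra hne
  rcases hsD i j hi hj hne with ⟨hj0, hie⟩ | ⟨hin, hjn⟩
  · subst hj0
    by_cases hin : i+1 < n
    · apply hne
      rw [h1 i 0 hi hj, if_neg (by omega), if_pos hin, zero_add]
      -- backward chain for r' (i+1) 0
      have hterm : uh r' s' (i+1) (n-(i+1)-1) = 0 := by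
        rw [uh, if_neg (by omega), show (i+1)+(n-(i+1)-1) = n-1 by omega]
        have hD := h1 (n-1) (n-(i+1)) (by omega) (by omega)
        rw [hDz (n-1) (n-(i+1)) (by omega) (by omega) (by omega) (Or.inr (by omega)),
          if_pos (by omega), if_neg (by omega), add_zero,
          show n-(i+1)-1 = n-(i+1)-1 by rfl] at hD
        have := hD.symm
        rwa [star_eq_zero] at this
      have hrec : ∀ t, t < n-(i+1)-1 →
          star (uh r' s' (i+1) t) + uh r' s' (i+1) (t+1) = 0 := by
        intro t ht
        rcases Nat.mod_two_eq_zero_or_one t with hp | hp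
        · rw [uh, if_pos hp, uh, if_neg (by omega)]
          have hE := h2 t ((i+1)+t+1) (by omega) (by omega)
          rw [hEz t ((i+1)+t+1) (by omega) (by omega) (Or.inl (by omega)),
            if_pos (by omega), if_pos (by omega), Nat.add_sub_cancel] at hE
          rw [show (i+1)+(t+1) = (i+1)+t+1 by omega]
          exact hE.symm
        · rw [uh, if_neg (by omega), uh, if_pos (by omega)]
          have hD := h1 ((i+1)+t) (t+1) (by omega) (by omega)
          rw [hDz ((i+1)+t) (t+1) (by omega) (by omega) (by omega) (Or.inl (by omega)),
            if_pos (by omega), if_pos (by omega), Nat.add_sub_cancel] at hD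
          rw [show (i+1)+(t+1) = (i+1)+t+1 by omega]
          exact hD.symm
      have h0 := zchain_bwd (uh r' s' (i+1)) (n-(i+1)-1) hterm hrec
      rwa [uh, if_pos (by omega), Nat.add_zero] at h0
    · apply hne
      rw [h1 i 0 hi hj, if_neg (by omega), if_neg hin, add_zero]
  · apply hne
    have hi' : i = n-1 := by omega
    subst hi'
    rw [h1 (n-1) j (by omega) hj, if_pos (by omega), if_neg (by omega), add_zero]
    -- forward chain for s' (j-1) (n-1)
    have h0 : uh s' r' (j-n) 0 = 0 := by
      rw [uh, if_pos (by omega), Nat.add_zero]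
      have hE := h2 (j-n-1) 0 (by omega) (by omega)
      rw [hEz (j-n-1) 0 (by omega) (by omega) (Or.inl (by omega)),
        if_neg (by omega), if_pos (by omega), zero_add,
        show j-n-1+1 = j-n by omega] at hE
      exact hE.symm
    have hrec : ∀ t, t < n-1 →
        star (uh s' r' (j-n) t) + uh s' r' (j-n) (t+1) = 0 := by
      intro t ht
      rcases Nat.mod_two_eq_zero_or_one t with hp | hp
      · rw [uh, if_pos hp, uh, if_neg (by omega)]
        have hD := h1 t ((j-n)+t+1) (by omega) (by omega)
        rw [hDz t ((j-n)+t+1) (by omega) (by omega) (by omega) (Or.inl (by omega)),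
          if_pos (by omega), if_pos (by omega), Nat.add_sub_cancel] at hD
        rw [show (j-n)+(t+1) = (j-n)+t+1 by omega]
        exact hD.symm
      · rw [uh, if_neg (by omega), uh, if_pos (by omega)]
        have hE := h2 ((j-n)+t) (t+1) (by omega) (by omega)
        rw [hEz ((j-n)+t) (t+1) (by omega) (by omega) (Or.inl (by omega)),
          if_pos (by omega), if_pos (by omega), Nat.add_sub_cancel] at hE
        rw [show (j-n)+(t+1) = (j-n)+t+1 by omega]
        exact hE.symm
    have hfin := zchain_fwd (uh s' r' (j-n)) (n-1) h0 hrec (n-1) le_rfl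
    rw [uh, if_pos (by omega), show (j-n)+(n-1) = j-1 by omega] at hfin
    rw [hfin, star_zero]

lemma homE : ∀ i j, i < m → j < n → En i j = 0 := by
  have hDz : ∀ i j, i < n → j < m → 1 ≤ j → (i+1 < n ∨ j ≤ n) → Dn i j = 0 := by
    intro i j hi hj hj1 hd
    by_contra hne
    rcases hsD i j hi hj hne with ⟨h, _⟩ | ⟨h, h'⟩ <;> omega
  have hEz : ∀ i j, i < m → j < n → (i+1 < m ∨ j % 2 = 1) → En i j = 0 := by
    intro i j hi hj hd
    by_contra hne
    obtain ⟨h, h'⟩ := hsE i j hi hj hne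
    rcases hd with h'' | h'' <;> omega
  intro i j hi hj
  by_contra hne
  obtain ⟨him, hje⟩ := hsE i j hi hj hne
  apply hne
  have hi' : i = m-1 := by omega
  subst hi'
  by_cases hj0 : j = 0
  · subst hj0
    rw [h2 (m-1) 0 (by omega) hj, if_neg (by omega), if_neg (by omega), add_zero]
  · rw [h2 (m-1) j (by omega) hj, if_pos (by omega), if_neg (by omega), add_zero]
    have h0 : uh s' r' (m-j) 0 = 0 := by
      rw [uh, if_pos (by omega), Nat.add_zero]
      have hE := h2 (m-j-1) 0 (by omega) (by omega)
      rw [hEz (m-j-1) 0 (by omega) (by omega) (Or.inl (by omega)),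
        if_neg (by omega), if_pos (by omega), zero_add,
        show m-j-1+1 = m-j by omega] at hE
      exact hE.symm
    have hrec : ∀ t, t < j-1 →
        star (uh s' r' (m-j) t) + uh s' r' (m-j) (t+1) = 0 := by
      intro t ht
      rcases Nat.mod_two_eq_zero_or_one t with hp | hp
      · rw [uh, if_pos hp, uh, if_neg (by omega)]
        have hD := h1 t ((m-j)+t+1) (by omega) (by omega)
        rw [hDz t ((m-j)+t+1) (by omega) (by omega) (by omega) (Or.inl (by omega)),
          if_pos (by omega), if_pos (by omega), Nat.add_sub_cancel] at hD
        rw [show (m-j)+(t+1) = (m-j)+t+1 by omega]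
        exact hD.symm
      · rw [uh, if_neg (by omega), uh, if_pos (by omega)]
        have hE := h2 ((m-j)+t) (t+1) (by omega) (by omega)
        rw [hEz ((m-j)+t) (t+1) (by omega) (by omega) (Or.inl (by omega)),
          if_pos (by omega), if_pos (by omega), Nat.add_sub_cancel] at hE
        rw [show (m-j)+(t+1) = (m-j)+t+1 by omega]
        exact hE.symm
    have hfin := zchain_fwd (uh s' r' (m-j)) (j-1) h0 hrec (j-1) le_rfl
    rw [uh, if_neg (by omega), show (m-j)+(j-1) = m-1 by omega] at hfin
    rw [hfin, star_zero]

end Hom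

lemma AxF_of {m n : ℕ} (f : ℕ → ℕ → ℂ) (i j : ℕ) (hi : i < m) (hj : j < n) :
    AxF m n (Matrix.of fun (a : Fin m) (b : Fin n) => f (a : ℕ) (b : ℕ)) i j = f i j := by
  rw [AxF, dif_pos ⟨hi, hj⟩]; rfl


/-- For `m ≥ n`, `n` odd: `ℂ^{n×m} × ℂ^{m×n} = T(J_m(0), J_n(0)) ⊕_ℝ (V × W)`,
where `V` consists of matrices supported on the first-column positions
`(n−2t, 1)` for `0 ≤ t ≤ (n−1)/2` together with the last-row positions `(n, j)`
for `n+2 ≤ j ≤ m`, and `W` of matrices supported on the last-row positions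
`(m, 2t+1)` for `0 ≤ t ≤ (n−1)/2`. -/
theorem stmt16 (m n : ℕ) (hmn : n ≤ m) (hn : n % 2 = 1)
    (B : Matrix (Fin n) (Fin m) ℂ) (A : Matrix (Fin m) (Fin n) ℂ) :
    ∃! DE : Matrix (Fin n) (Fin m) ℂ × Matrix (Fin m) (Fin n) ℂ,
      ((∀ (p : Fin n) (q : Fin m), DE.1 p q ≠ 0 →
          ((q : ℕ) = 0 ∧ (p : ℕ) % 2 = 0) ∨
          ((p : ℕ) + 1 = n ∧ n + 1 ≤ (q : ℕ))) ∧
       (∀ (p : Fin m) (q : Fin n), DE.2 p q ≠ 0 →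
          (p : ℕ) + 1 = m ∧ (q : ℕ) % 2 = 0)) ∧
      (B - DE.1, A - DE.2) ∈ Tpair (Jmat m 0) (Jmat n 0) := by
  have hn1 : 1 ≤ n := by omega
  have hm1 : 1 ≤ m := by omega
  set Ax : ℕ → ℕ → ℂ := AxF m n A with hAx
  set Bx : ℕ → ℕ → ℂ := AxF n m B with hBx
  set DD : Matrix (Fin n) (Fin m) ℂ :=
    Matrix.of (fun (p : Fin n) (q : Fin m) => Dx m n Ax Bx (p : ℕ) (q : ℕ)) with hDD
  set EE : Matrix (Fin m) (Fin n) ℂ :=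
    Matrix.of (fun (p : Fin m) (q : Fin n) => Ex m n Ax Bx (p : ℕ) (q : ℕ)) with hEE
  set Sm : Matrix (Fin m) (Fin n) ℂ :=
    Matrix.of (fun (a : Fin m) (b : Fin n) => G m n Ax Bx true (a : ℕ) (b : ℕ)) with hSm
  set Rm : Matrix (Fin n) (Fin m) ℂ :=
    Matrix.of (fun (a : Fin n) (b : Fin m) => G m n Ax Bx false (a : ℕ) (b : ℕ)) with hRm
  -- support of DD
  have supD : ∀ (p : Fin n) (q : Fin m), DD p q ≠ 0 →
      ((q : ℕ) = 0 ∧ (p : ℕ) % 2 = 0) ∨ ((p : ℕ) + 1 = n ∧ n + 1 ≤ (q : ℕ)) := by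
    intro p q hne
    rw [hDD, Matrix.of_apply, Dx] at hne
    by_cases hq : (q : ℕ) = 0
    · left
      refine ⟨hq, ?_⟩
      rcases Nat.mod_two_eq_zero_or_one (p : ℕ) with h | h
      · exact h
      · exfalso; rw [if_pos hq, dl, if_pos h] at hne; exact hne rfl
    · by_cases hp : (p : ℕ) = n - 1
      · right
        refine ⟨by omega, ?_⟩
        by_contra hle
        rw [if_neg hq, if_pos hp,
          H1 m n Ax Bx hn (q : ℕ) (by omega) (by omega), star_star, sub_self] at hne
        exact hne rfl
      · rw [if_neg hq, if_neg hp] at hne; exact absurd rfl hne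
  -- support of EE
  have supE : ∀ (p : Fin m) (q : Fin n), EE p q ≠ 0 →
      (p : ℕ) + 1 = m ∧ (q : ℕ) % 2 = 0 := by
    intro p q hne
    rw [hEE, Matrix.of_apply, Ex] at hne
    by_cases hp : (p : ℕ) = m - 1
    · refine ⟨by omega, ?_⟩
      rcases Nat.mod_two_eq_zero_or_one (q : ℕ) with h | h
      · exact h
      · exfalso
        rw [if_pos hp, if_pos (by omega),
          H2 m n Ax Bx hmn (q : ℕ) h q.isLt, star_star, sub_self] at hne
        exact hne rfl
    · rw [if_neg hp] at hne; exact absurd rfl hne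
  -- the two matrix identities
  have he1 : B - DD = Smᴴ * Jmat m 0 + Jmat n 0 * Rm := by
    apply bridge1'
    intro i j hi hj
    rw [hDD, AxF_of _ i j hi hj, ← hBx, K1 m n Ax Bx hn i j hi hj]
    congr 1
    · by_cases h1j : 1 ≤ j
      · rw [if_pos h1j, if_pos h1j, hSm, AxF_of _ (j-1) i (by omega) hi]
      · rw [if_neg h1j, if_neg h1j]
    · by_cases h2i : i + 1 < n
      · rw [if_pos h2i, if_pos h2i, hRm, AxF_of _ (i+1) j h2i hj]
      · rw [if_neg h2i, if_neg h2i]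
  have he2 : A - EE = Rmᴴ * Jmat n 0 + Jmat m 0 * Sm := by
    apply bridge1'
    intro i j hi hj
    rw [hEE, AxF_of _ i j hi hj, ← hAx, K2 m n Ax Bx i j hi hj]
    congr 1
    · by_cases h1j : 1 ≤ j
      · rw [if_pos h1j, if_pos h1j, hRm, AxF_of _ (j-1) i (by omega) hi]
      · rw [if_neg h1j, if_neg h1j]
    · by_cases h2i : i + 1 < m
      · rw [if_pos h2i, if_pos h2i, hSm, AxF_of _ (i+1) j h2i hj]
      · rw [if_neg h2i, if_neg h2i]
  refine ⟨⟨DD, EE⟩, ⟨⟨supD, supE⟩, Sm, Rm, Prod.ext he1 he2⟩, ?_⟩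
  -- uniqueness
  rintro ⟨D2, E2⟩ ⟨⟨hyD, hyE⟩, S2, R2, hy2⟩
  have c1 : B - D2 = S2ᴴ * Jmat m 0 + Jmat n 0 * R2 := congrArg Prod.fst hy2
  have c2 : A - E2 = R2ᴴ * Jmat n 0 + Jmat m 0 * S2 := congrArg Prod.snd hy2
  have d1 : D2 - DD = (Sm - S2)ᴴ * Jmat m 0 + Jmat n 0 * (Rm - R2) := by
    have h : D2 - DD = (B - DD) - (B - D2) := by abel
    rw [h, he1, c1, Matrix.conjTranspose_sub, Matrix.sub_mul, Matrix.mul_sub]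
    abel
  have d2 : E2 - EE = (Rm - R2)ᴴ * Jmat n 0 + Jmat m 0 * (Sm - S2) := by
    have h : E2 - EE = (A - EE) - (A - E2) := by abel
    rw [h, he2, c2, Matrix.conjTranspose_sub, Matrix.sub_mul, Matrix.mul_sub]
    abel
  have hsD' : ∀ i j, i < n → j < m → AxF n m (D2 - DD) i j ≠ 0 →
      (j = 0 ∧ i % 2 = 0) ∨ (i + 1 = n ∧ n + 1 ≤ j) := by
    intro i j hi hj hne
    rw [AxF, dif_pos ⟨hi, hj⟩, Matrix.sub_apply] at hne
    have h : D2 ⟨i, hi⟩ ⟨j, hj⟩ ≠ 0 ∨ DD ⟨i, hi⟩ ⟨j, hj⟩ ≠ 0 := by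
      by_contra hcon
      push_neg at hcon
      rw [hcon.1, hcon.2, sub_self] at hne
      exact hne rfl
    rcases h with h | h
    · exact hyD _ _ h
    · exact supD _ _ h
  have hsE' : ∀ i j, i < m → j < n → AxF m n (E2 - EE) i j ≠ 0 →
      i + 1 = m ∧ j % 2 = 0 := by
    intro i j hi hj hne
    rw [AxF, dif_pos ⟨hi, hj⟩, Matrix.sub_apply] at hne
    have h : E2 ⟨i, hi⟩ ⟨j, hj⟩ ≠ 0 ∨ EE ⟨i, hi⟩ ⟨j, hj⟩ ≠ 0 := by
      by_contra hcon
      push_neg at hcon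
      rw [hcon.1, hcon.2, sub_self] at hne
      exact hne rfl
    rcases h with h | h
    · exact hyE _ _ h
    · exact supE _ _ h
  have hD0 := homD m n hmn hn (AxF m n (Sm - S2)) (AxF n m (Rm - R2))
    (AxF n m (D2 - DD)) (AxF m n (E2 - EE))
    (bridge1 (D2 - DD) (Sm - S2) (Rm - R2) d1)
    (bridge1 (E2 - EE) (Rm - R2) (Sm - S2) d2)
    hsD' hsE'
  have hE0 := homE m n hmn hn (AxF m n (Sm - S2)) (AxF n m (Rm - R2))
    (AxF n m (D2 - DD)) (AxF m n (E2 - EE))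
    (bridge1 (D2 - DD) (Sm - S2) (Rm - R2) d1)
    (bridge1 (E2 - EE) (Rm - R2) (Sm - S2) d2)
    hsD' hsE'
  have eD : D2 = DD := by
    ext p q
    have h := hD0 (p : ℕ) (q : ℕ) p.isLt q.isLt
    rw [AxF_eq] at h
    rw [Matrix.sub_apply] at h
    have := sub_eq_zero.mp h
    exact this
  have eE : E2 = EE := by
    ext p q
    have h := hE0 (p : ℕ) (q : ℕ) p.isLt q.isLt
    rw [AxF_eq] at h
    rw [Matrix.sub_apply] at h
    exact sub_eq_zero.mp h
  exact Prod.ext eD eE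
end

section
/- Let λ, μ ∈ ℂ with |λ| > 1 and |μ| = 1. Then the map (S,R) ↦ (S*·H_m(λ) + μ·Δ_n·R, μ·R*·Δ_n + H_m(λ)·S), where S ∈ ℂ^{2m×n} and R ∈ ℂ^{n×2m}, is surjective onto ℂ^{n×2m} × ℂ^{2m×n}; equivalently, T(H_m(λ), μΔ_n) = ℂ^{n×2m} × ℂ^{2m×n}. -/
open Matrix

/-! Since `μΔ_n` is invertible, the first equation can be solved for `R` whatever `S` is, and
substituting into the second one reduces the claim to the surjectivity, equivalently injectivity,
of the Sylvester-type operator `S ↦ H S - Hᴴ S K` with `K = (μΔ_n)⁻ᴴ (μΔ_n)`. Writing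
`Δ_n = F (1 + iN)` with `F` the exchange matrix and `N` the nilpotent shift gives
`K = μ² (1 - iN)⁻¹ (1 + iN)`, whose only eigenvalue is `μ²`. On the two block rows of `S` the
kernel equations read `J S₁ = S₁ K` and `S₂ = Jᴴ S₂ K`, where `J = J_m(λ)` has the single
eigenvalue `λ`; they force `S₁ = S₂ = 0` because `λ ≠ μ²` and `μ² λ̄ ≠ 1`, which is exactly
what `|λ| > 1 = |μ|` provides. -/

theorem Matrix.isNilpotent_of_isUpperTriangular {R ι : Type*} [CommRing R] [Fintype ι]
    [DecidableEq ι] [LinearOrder ι] {M : Matrix ι ι R} (hM : M.IsUpperTriangular)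
    (hdiag : ∀ i, M i i = 0) : IsNilpotent M := by
  refine ⟨Fintype.card ι, ?_⟩
  simpa [charpoly_of_isUpperTriangular M hM, hdiag] using aeval_self_charpoly M

def shiftMat (n : ℕ) {R : Type*} [Zero R] [One R] : Matrix (Fin n) (Fin n) R :=
  Matrix.of fun i j => if (j : ℕ) = i + 1 then 1 else 0

theorem isNilpotent_shiftMat (n : ℕ) {R : Type*} [CommRing R] :
    IsNilpotent (shiftMat n : Matrix (Fin n) (Fin n) R) :=
  Matrix.isNilpotent_of_isUpperTriangular
    (fun i j (hji : j < i) => if_neg (by omega))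
    (fun i => by simp [shiftMat])

theorem isNilpotent_inverse_one_sub_mul_one_add_sub_one {R : Type*} [Ring R] {x : R}
    (hx : IsNilpotent x) : IsNilpotent (Ring.inverse (1 - x) * (1 + x) - 1) := by
  obtain ⟨u, hu⟩ := hx.isUnit_one_sub
  have hux : Commute (↑u⁻¹ : R) x :=
    Commute.units_inv_left (hu ▸ (Commute.one_left x).sub_left (Commute.refl x))
  have hcayley : Ring.inverse (1 - x) * (1 + x) - 1 = ↑u⁻¹ * (x + x) := by
    rw [← hu, Ring.inverse_unit]
    calc (↑u⁻¹ : R) * (1 + x) - 1 = ↑u⁻¹ * (1 + x) - ↑u⁻¹ * ↑u := by rw [Units.inv_mul]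
      _ = ↑u⁻¹ * (x + x) := by rw [← mul_sub, hu]; congr 1; abel
  rw [hcayley]
  exact (hux.add_right hux).isNilpotent_mul_left ((Commute.refl x).isNilpotent_add hx hx)

theorem isUnit_smul_one_add_of_isNilpotent {𝕜 A : Type*} [Field 𝕜] [Ring A] [Algebra 𝕜 A]
    {c : 𝕜} (hc : c ≠ 0) {N : A} (hN : IsNilpotent N) : IsUnit (c • (1 : A) + N) :=
  hN.isUnit_add_left_of_commute
    (by simpa [Algebra.algebraMap_eq_smul_one] using hc.isUnit.map (algebraMap 𝕜 A))
    ((Commute.one_right N).smul_right c)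

theorem Matrix.eq_zero_of_mul_eq_mul_mul_of_isNilpotent {R p q : Type*} [CommRing R]
    [Fintype p] [Fintype q] [DecidableEq p] [DecidableEq q] {P Q : Matrix p p R}
    {N : Matrix q q R} {X : Matrix p q R} (hP : IsUnit P) (hPQ : Commute P Q)
    (hN : IsNilpotent N) (h : P * X = Q * X * N) : X = 0 := by
  have hpow : ∀ k : ℕ, P ^ k * X = Q ^ k * X * N ^ k := by
    intro k
    induction k with
    | zero => simp
    | succ k ih =>
      calc P ^ (k + 1) * X = Q ^ k * (P * X) * N ^ k := by
            rw [pow_succ', Matrix.mul_assoc, ih, ← Matrix.mul_assoc, ← Matrix.mul_assoc,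
              (hPQ.pow_right k).eq, Matrix.mul_assoc (Q ^ k)]
        _ = Q ^ (k + 1) * X * N ^ (k + 1) := by
            rw [h, pow_succ, pow_succ', Matrix.mul_assoc, Matrix.mul_assoc, Matrix.mul_assoc,
              Matrix.mul_assoc, Matrix.mul_assoc]
  obtain ⟨k, hk⟩ := hN
  obtain ⟨u, hu⟩ := hP.pow k
  calc X = (↑u⁻¹ * ↑u : Matrix p p R) * X := by rw [Units.inv_mul, Matrix.one_mul]
    _ = 0 := by rw [Matrix.mul_assoc, hu, hpow, hk, Matrix.mul_zero, Matrix.mul_zero]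

theorem Tpair_eq_univ_of_injective {p q : Type*} [Fintype p] [Fintype q] [DecidableEq q]
    {M : Matrix p p ℂ} {N K : Matrix q q ℂ} (hN : IsUnit N)
    (hK : Nᴴ * K = N) (hM : ∀ S : Matrix p q ℂ, M * S = Mᴴ * S * K → S = 0) :
    Tpair M N = Set.univ := by
  let φ : Matrix p q ℂ →ₗ[ℂ] Matrix p q ℂ :=
    { toFun := fun S => M * S - Mᴴ * S * K
      map_add' := fun S T => by simp only [Matrix.mul_add, Matrix.add_mul]; abel
      map_smul' := fun c S => by simp [smul_sub] }
  have hφ : Function.Surjective φ := LinearMap.injective_iff_surjective.mp <|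
    (injective_iff_map_eq_zero φ).mpr fun S hS => hM S (sub_eq_zero.mp hS)
  obtain ⟨u, rfl⟩ := hN
  have huK : (↑u⁻¹ : Matrix q q ℂ)ᴴ * u = K := by
    rw [← hK, ← Matrix.mul_assoc, ← conjTranspose_mul, Units.mul_inv, conjTranspose_one,
      Matrix.one_mul]
  refine Set.eq_univ_of_forall fun ⟨B, A⟩ => ?_
  obtain ⟨S, hS⟩ := hφ (A - Bᴴ * K)
  refine ⟨S, (↑u⁻¹ : Matrix q q ℂ) * (B - Sᴴ * M), ?_⟩
  simp only [Prod.mk.injEq]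
  constructor
  · rw [← Matrix.mul_assoc, Units.mul_inv, Matrix.one_mul, add_sub_cancel]
  · rw [conjTranspose_mul, Matrix.mul_assoc, huK, conjTranspose_sub, conjTranspose_mul,
      conjTranspose_conjTranspose, Matrix.sub_mul]
    change M * S - Mᴴ * S * K = A - Bᴴ * K at hS
    rw [sub_eq_iff_eq_add.mp hS.symm]
    abel

theorem Jmat_eq_smul_one_add_shiftMat (m : ℕ) (l : ℂ) : Jmat m l = l • 1 + shiftMat m := by
  ext i j
  simp only [Jmat, shiftMat, Matrix.add_apply, Matrix.smul_apply, one_apply, of_apply, Fin.ext_iff,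
    smul_eq_mul]
  split_ifs <;> simp_all

theorem conjTranspose_Jmat (m : ℕ) (l : ℂ) : (Jmat m l)ᴴ = star l • 1 + (shiftMat m)ᵀ := by
  rw [Jmat_eq_smul_one_add_shiftMat, conjTranspose_add, conjTranspose_smul, conjTranspose_one]
  congr 1
  ext i j
  simp [shiftMat]

theorem eq_zero_of_Hmat_mul_eq {q : Type*} [Fintype q] [DecidableEq q] {m : ℕ} {l c : ℂ}
    (hlc : l ≠ c) (hcl : c * star l ≠ 1) {K : Matrix q q ℂ} (hK : IsNilpotent (K - c • 1))
    {S : Matrix (Fin m ⊕ Fin m) q ℂ} (h : Hmat m l * S = (Hmat m l)ᴴ * S * K) : S = 0 := by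
  rw [← fromRows_toRows S] at h ⊢
  simp only [Hmat, fromBlocks_conjTranspose, fromBlocks_mul_fromRows, fromRows_mul,
    conjTranspose_zero, conjTranspose_one, Matrix.zero_mul, Matrix.one_mul, zero_add,
    add_zero] at h
  obtain ⟨h₂, h₁⟩ := fromRows_inj h
  have hshift : IsNilpotent (shiftMat m : Matrix (Fin m) (Fin m) ℂ) := isNilpotent_shiftMat m
  have hshiftT : IsNilpotent (shiftMat m : Matrix (Fin m) (Fin m) ℂ)ᵀ := by
    obtain ⟨k, hk⟩ := hshift
    exact ⟨k, by rw [← transpose_pow, hk, transpose_zero]⟩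
  have hS₁ : S.toRows₁ = 0 := by
    refine Matrix.eq_zero_of_mul_eq_mul_mul_of_isNilpotent (P := Jmat m l - c • 1) (Q := 1) ?_
      (Commute.one_right _) hK ?_
    · rw [Jmat_eq_smul_one_add_shiftMat, add_sub_right_comm, ← sub_smul]
      exact isUnit_smul_one_add_of_isNilpotent (sub_ne_zero.mpr hlc) hshift
    · simp only [Matrix.sub_mul, Matrix.mul_sub, smul_mul, Matrix.mul_smul, Matrix.one_mul,
        Matrix.mul_one, h₁]
  have hS₂ : S.toRows₂ = 0 := by
    refine Matrix.eq_zero_of_mul_eq_mul_mul_of_isNilpotent (P := 1 - c • (Jmat m l)ᴴ)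
      (Q := (Jmat m l)ᴴ) ?_ ((Commute.one_left _).sub_left ((Commute.refl _).smul_left c)) hK ?_
    · have : 1 - c • (Jmat m l)ᴴ = (1 - c * star l) • 1 + -(c • (shiftMat m)ᵀ) := by
        rw [conjTranspose_Jmat]; module
      rw [this]
      exact isUnit_smul_one_add_of_isNilpotent (sub_ne_zero.mpr hcl.symm) (hshiftT.smul c).neg
    · rw [Matrix.sub_mul, Matrix.one_mul, smul_mul, Matrix.mul_sub, Matrix.mul_smul,
        Matrix.mul_one]
      exact congrArg (· - _) h₂
  rw [hS₁, hS₂, fromRows_zero]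

def exchangeMat (n : ℕ) {R : Type*} [Zero R] [One R] : Matrix (Fin n) (Fin n) R :=
  (1 : Matrix (Fin n) (Fin n) R).submatrix Fin.rev id

section Exchange

variable {n : ℕ} {R : Type*} [Semiring R]

theorem exchangeMat_mul (M : Matrix (Fin n) (Fin n) R) :
    exchangeMat n * M = M.submatrix Fin.rev id :=
  one_submatrix_mul Fin.rev (Equiv.refl _) M

theorem exchangeMat_mul_self :
    exchangeMat n * exchangeMat n = (1 : Matrix (Fin n) (Fin n) R) := by
  rw [exchangeMat_mul, exchangeMat, submatrix_submatrix, Fin.rev_involutive.comp_self]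
  exact submatrix_id_id 1

theorem isUnit_exchangeMat : IsUnit (exchangeMat n : Matrix (Fin n) (Fin n) R) :=
  isUnit_iff_exists.mpr ⟨_, exchangeMat_mul_self, exchangeMat_mul_self⟩

end Exchange

theorem Dmat_eq_exchangeMat_mul (n : ℕ) :
    Dmat n = exchangeMat n * (1 + Complex.I • shiftMat n) := by
  rw [exchangeMat_mul]
  ext i j
  simp only [Dmat, shiftMat, submatrix_apply, id, Matrix.add_apply, Matrix.smul_apply, one_apply,
    of_apply, Fin.ext_iff, Fin.val_rev, smul_eq_mul]
  split_ifs <;> first | (exfalso; omega) | simp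

theorem conjTranspose_Dmat_s17 (n : ℕ) :
    (Dmat n)ᴴ = exchangeMat n * (1 - Complex.I • shiftMat n) := by
  rw [exchangeMat_mul]
  ext i j
  simp only [Dmat, shiftMat, conjTranspose_apply, submatrix_apply, id, Matrix.sub_apply,
    Matrix.smul_apply, one_apply, of_apply, Fin.ext_iff, Fin.val_rev, smul_eq_mul]
  split_ifs <;> first | (exfalso; omega) | simp

theorem isUnit_smul_Dmat (n : ℕ) {μ : ℂ} (hμ : μ ≠ 0) : IsUnit (μ • Dmat n) := by
  have hD : IsUnit (Dmat n) := by
    rw [Dmat_eq_exchangeMat_mul]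
    exact isUnit_exchangeMat.mul ((isNilpotent_shiftMat n).smul _).isUnit_one_add
  simpa only [Units.smul_mk0] using hD.smul (Units.mk0 μ hμ)

theorem exists_conjTranspose_smul_Dmat_mul_eq (n : ℕ) {μ : ℂ} (hμ : ‖μ‖ = 1) :
    ∃ K : Matrix (Fin n) (Fin n) ℂ,
      (μ • Dmat n)ᴴ * K = μ • Dmat n ∧ IsNilpotent (K - μ ^ 2 • 1) := by
  set x : Matrix (Fin n) (Fin n) ℂ := Complex.I • shiftMat n
  have hx : IsNilpotent x := (isNilpotent_shiftMat n).smul _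
  refine ⟨μ ^ 2 • (Ring.inverse (1 - x) * (1 + x)), ?_, ?_⟩
  · have hμμ : star μ * μ ^ 2 = μ := by
      rw [pow_two, ← mul_assoc, Complex.star_def, Complex.conj_mul', hμ]
      simp
    rw [conjTranspose_smul, conjTranspose_Dmat_s17, Dmat_eq_exchangeMat_mul, smul_mul_smul_comm, hμμ,
      Matrix.mul_assoc, ← Matrix.mul_assoc (1 - x), Ring.mul_inverse_cancel _ hx.isUnit_one_sub,
      Matrix.one_mul]
  · rw [← smul_sub]
    exact (isNilpotent_inverse_one_sub_mul_one_add_sub_one hx).smul _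

/-- For `|λ| > 1`, `|μ| = 1`: `T(H_m(λ), μΔ_n) = ℂ^{n×2m} × ℂ^{2m×n}`. -/
theorem stmt17 (m n : ℕ) (l μ : ℂ)
    (hl : 1 < ‖l‖) (hμ : ‖μ‖ = 1)
    (B : Matrix (Fin n) (Fin m ⊕ Fin m) ℂ)
    (A : Matrix (Fin m ⊕ Fin m) (Fin n) ℂ) :
    ∃ (S : Matrix (Fin m ⊕ Fin m) (Fin n) ℂ)
      (R : Matrix (Fin n) (Fin m ⊕ Fin m) ℂ),
      B = Sᴴ * Hmat m l + (μ • Dmat n) * R ∧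
      A = Rᴴ * (μ • Dmat n) + Hmat m l * S := by
  have hμ2 : ‖μ ^ 2‖ = 1 := by rw [norm_pow, hμ, one_pow]
  have hlμ : l ≠ μ ^ 2 := fun h => hl.ne' (by rw [h, hμ2])
  have hμl : μ ^ 2 * star l ≠ 1 := fun h => hl.ne' (by
    simpa [hμ2] using congrArg norm h)
  have hμ0 : μ ≠ 0 := norm_ne_zero_iff.mp (hμ ▸ one_ne_zero)
  obtain ⟨K, hDK, hK⟩ := exists_conjTranspose_smul_Dmat_mul_eq n hμ
  have hT : Tpair (Hmat m l) (μ • Dmat n) = Set.univ :=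
    Tpair_eq_univ_of_injective (isUnit_smul_Dmat n hμ0) hDK
      fun _ => eq_zero_of_Hmat_mul_eq hlμ hμl hK
  obtain ⟨S, R, hSR⟩ : (B, A) ∈ Tpair (Hmat m l) (μ • Dmat n) := hT ▸ Set.mem_univ _
  exact ⟨S, R, Prod.mk.inj hSR⟩
end
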